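/- Let (Ω, A, P) be a complete probability space with measurable maps Y : Ω → E, X : Ω → S into filtered Polish spaces. The following are equivalent: (ii) for every t ∈ [0,1] and A ∈ B_t(S), P(X ∈ A | G_t^Y) = P(X ∈ A | σ(Y)) a.s.; (iii) for every t ∈ [0,1], the conditional law of Y given σ(G_t^X ∪ G_t^Y) equals the conditional law of Y given G_t^Y. -/

import Mathlib

/-!
Fix `t` and put `m₁ = X⁻¹ B_t(S)`, `m = Y⁻¹ B_t(E)` and `m₂ = σ(Y) ⊇ m`. Completeness makes the
augmented σ-fields sub-σ-fields, and augmenting by null sets does not change conditional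
expectations, so the augmentations can be dropped. Both conditions are then compared through the
self-adjointness of conditional expectation, `∫ E[f | m] g = ∫ f E[g | m]`: if
`E[1_s | m] = E[1_s | ℋ]` and `φ` is `ℋ`-measurable, then `∫_s E[φ | m] = ∫_s φ`.
For (ii) ⇒ (iii) take `ℋ = m₂` and `s = A ∩ C` with `A ∈ m₁`, `C ∈ m`; these sets form a
π-system generating `m₁ ⊔ m`, and (ii) passes from `A` to `A ∩ C` by pulling `1_C` out.
For (iii) ⇒ (ii) take `ℋ = m₁ ⊔ m` and `s ∈ m₂`.
-/

open MeasureTheory ProbabilityTheory Filter Set Topology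

noncomputable section

/-- The augmentation of a sub-σ-field `m` by the `η`-null sets. -/
def aug {α : Type*} [MeasurableSpace α] (η : Measure α) (m : MeasurableSpace α) :
    MeasurableSpace α :=
  m ⊔ MeasurableSpace.generateFrom {s : Set α | η s = 0}

/-- `Θ` is a conditional probability kernel of `γ` with respect to `η`. -/
def IsCondKernel {E S : Type*} [MeasurableSpace E] [MeasurableSpace S]
    (η : Measure E) (γ : Measure (E × S)) (Θ : Kernel E S) : Prop :=
  IsMarkovKernel Θ ∧ ∀ A B, MeasurableSet A → MeasurableSet B →
    γ (A ×ˢ B) = ∫⁻ ω in A, Θ ω B ∂η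

/-- A plan `γ` on `E × S` with first marginal `η` is causal for the filtrations
`ℱE`, `ℱS` if it admits a conditional kernel `Θ` with respect to `η` such that for every
`t` and every `C ∈ ℱS t`, `ω ↦ Θ ω C` is measurable for the `η`-augmentation of `ℱE t`. -/
def CausalPlan {E S : Type*} [MeasurableSpace E] [MeasurableSpace S]
    (ℱE : unitInterval → MeasurableSpace E) (ℱS : unitInterval → MeasurableSpace S)
    (η : Measure E) (γ : Measure (E × S)) : Prop :=
  γ.fst = η ∧ ∃ Θ : Kernel E S, IsCondKernel η γ Θ ∧
    ∀ t : unitInterval, ∀ C : Set S, MeasurableSet[ℱS t] C →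
      Measurable[aug η (ℱE t)] (fun ω => Θ ω C)

section

variable {Ω : Type*} {m m₁ m₂ 𝒢 ℋ m0 : MeasurableSpace Ω} {μ : Measure Ω}

lemma MeasurableSpace.isPiSystem_image2_inter (m₁ m₂ : MeasurableSpace Ω) :
    IsPiSystem (image2 (· ∩ ·) {s | MeasurableSet[m₁] s} {s | MeasurableSet[m₂] s}) := by
  rintro _ ⟨s₁, hs₁, t₁, ht₁, rfl⟩ _ ⟨s₂, hs₂, t₂, ht₂, rfl⟩ -
  refine ⟨s₁ ∩ s₂, hs₁.inter hs₂, t₁ ∩ t₂, ht₁.inter ht₂, ?_⟩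
  simp only [inter_inter_inter_comm]

lemma MeasurableSpace.generateFrom_image2_inter (m₁ m₂ : MeasurableSpace Ω) :
    generateFrom (image2 (· ∩ ·) {s | MeasurableSet[m₁] s} {s | MeasurableSet[m₂] s}) =
      m₁ ⊔ m₂ := by
  refine le_antisymm (generateFrom_le ?_) (sup_le (fun s hs => ?_) (fun s hs => ?_))
  · rintro _ ⟨s, hs, t, ht, rfl⟩
    exact (le_sup_left (b := m₂) s hs).inter (le_sup_right (a := m₁) t ht)
  · exact measurableSet_generateFrom ⟨s, hs, univ, MeasurableSet.univ, inter_univ s⟩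
  · exact measurableSet_generateFrom ⟨univ, MeasurableSet.univ, s, hs, univ_inter s⟩

lemma setIntegral_eq_of_isPiSystem {p : Set (Set Ω)} (hp : IsPiSystem p)
    (hgen : 𝒢 = MeasurableSpace.generateFrom p) (h𝒢 : 𝒢 ≤ m0) {f g : Ω → ℝ}
    (hf : Integrable f μ) (hg : Integrable g μ) (hint : ∫ ω, f ω ∂μ = ∫ ω, g ω ∂μ)
    (hp_eq : ∀ s ∈ p, ∫ ω in s, f ω ∂μ = ∫ ω in s, g ω ∂μ) {s : Set Ω}
    (hs : MeasurableSet[𝒢] s) : ∫ ω in s, f ω ∂μ = ∫ ω in s, g ω ∂μ := by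
  subst hgen
  induction s, hs using MeasurableSpace.induction_on_inter rfl hp with
  | empty => simp
  | basic s hs => exact hp_eq s hs
  | compl s hs ih =>
    have hs₀ : MeasurableSet s := h𝒢 s hs
    linarith [integral_add_compl hs₀ hf, integral_add_compl hs₀ hg]
  | iUnion s hdisj hs ih =>
    have hs₀ i : MeasurableSet (s i) := h𝒢 _ (hs i)
    rw [integral_iUnion hs₀ hdisj hf.integrableOn, integral_iUnion hs₀ hdisj hg.integrableOn]
    exact tsum_congr ih

lemma condExp_ae_eq_of_isPiSystem [IsFiniteMeasure μ] {p : Set (Set Ω)} (hp : IsPiSystem p)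
    (hgen : 𝒢 = MeasurableSpace.generateFrom p) (h𝒢 : 𝒢 ≤ m0) (hm : m ≤ 𝒢) {f : Ω → ℝ}
    (hf : Integrable f μ) (hp_eq : ∀ s ∈ p, ∫ ω in s, μ[f|m] ω ∂μ = ∫ ω in s, f ω ∂μ) :
    μ[f|𝒢] =ᵐ[μ] μ[f|m] :=
  (ae_eq_condExp_of_forall_setIntegral_eq h𝒢 hf (fun _ _ _ => integrable_condExp.integrableOn)
    (fun _ hs _ => setIntegral_eq_of_isPiSystem hp hgen h𝒢 integrable_condExp hf
      (integral_condExp (hm.trans h𝒢)) hp_eq hs)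
    (stronglyMeasurable_condExp.mono hm).aestronglyMeasurable).symm

lemma aug_le (hcomplete : ∀ s, μ s = 0 → MeasurableSet[m0] s) (hm : m ≤ m0) : aug μ m ≤ m0 :=
  sup_le hm (MeasurableSpace.generateFrom_le hcomplete)

lemma aug_sup_aug : aug μ m₁ ⊔ aug μ m₂ = aug μ (m₁ ⊔ m₂) := by
  simp only [aug, sup_sup_sup_comm, sup_idem]

lemma condExp_aug_ae_eq [IsFiniteMeasure μ] (hcomplete : ∀ s, μ s = 0 → MeasurableSet[m0] s)
    (hm : m ≤ m0) {f : Ω → ℝ} (hf : Integrable f μ) : μ[f|aug μ m] =ᵐ[μ] μ[f|m] := by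
  have hp : IsPiSystem ({s | MeasurableSet[m] s} ∪ {s | μ s = 0}) := by
    rintro s (hs | hs) t (ht | ht) -
    · exact Or.inl (hs.inter ht)
    all_goals first
      | exact Or.inr (measure_mono_null inter_subset_right ht)
      | exact Or.inr (measure_mono_null inter_subset_left hs)
  refine condExp_ae_eq_of_isPiSystem hp ?_ (aug_le hcomplete hm) le_sup_left hf ?_
  · rw [← MeasurableSpace.generateFrom_sup_generateFrom,
      @MeasurableSpace.generateFrom_measurableSet Ω m]
    rfl
  · rintro s (hs | hs)
    · exact setIntegral_condExp hm hf hs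
    · rw [setIntegral_measure_zero _ hs, setIntegral_measure_zero _ hs]

lemma integral_condExp_mul_eq_integral_mul_condExp [IsFiniteMeasure μ] (hm : m ≤ m0)
    {f g : Ω → ℝ} {R : ℝ} (hf : Integrable f μ) (hfR : ∀ᵐ ω ∂μ, |f ω| ≤ R)
    (hg : Integrable g μ) :
    ∫ ω, μ[f|m] ω * g ω ∂μ = ∫ ω, f ω * μ[g|m] ω ∂μ := by
  have hcf_bdd : ∀ᵐ ω ∂μ, ‖μ[f|m] ω‖ ≤ R := ae_bdd_abs_condExp_of_ae_bdd_abs hfR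
  have hf_bdd : ∀ᵐ ω ∂μ, ‖f ω‖ ≤ R := hfR
  calc ∫ ω, μ[f|m] ω * g ω ∂μ = ∫ ω, μ[μ[f|m] * g|m] ω ∂μ := (integral_condExp hm).symm
    _ = ∫ ω, μ[f|m] ω * μ[g|m] ω ∂μ := integral_congr_ae <|
      condExp_mul_of_stronglyMeasurable_left stronglyMeasurable_condExp
        (hg.bdd_mul (stronglyMeasurable_condExp.mono hm).aestronglyMeasurable hcf_bdd) hg
    _ = ∫ ω, μ[f * μ[g|m]|m] ω ∂μ := integral_congr_ae <|
      (condExp_mul_of_stronglyMeasurable_right stronglyMeasurable_condExp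
        (integrable_condExp.bdd_mul hf.aestronglyMeasurable hf_bdd) hf).symm
    _ = ∫ ω, f ω * μ[g|m] ω ∂μ := integral_condExp hm

lemma integral_indicator_one_mul {s : Set Ω} (hs : MeasurableSet s) (f : Ω → ℝ) :
    ∫ ω, s.indicator (fun _ => (1 : ℝ)) ω * f ω ∂μ = ∫ ω in s, f ω ∂μ := by
  simp only [← indicator_mul_left, one_mul]
  exact integral_indicator hs

lemma setIntegral_condExp_eq_of_condExp_indicator_ae_eq [IsFiniteMeasure μ] (hm : m ≤ m0)
    (hℋ : ℋ ≤ m0) {s : Set Ω} (hs : MeasurableSet s)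
    (hs_eq : μ[s.indicator (fun _ => (1 : ℝ))|m] =ᵐ[μ] μ[s.indicator (fun _ => (1 : ℝ))|ℋ])
    {φ : Ω → ℝ} (hφ : StronglyMeasurable[ℋ] φ) (hφ_int : Integrable φ μ) :
    ∫ ω in s, μ[φ|m] ω ∂μ = ∫ ω in s, φ ω ∂μ := by
  have hs_int : Integrable (s.indicator fun _ => (1 : ℝ)) μ := (integrable_const 1).indicator hs
  have hs_bdd : ∀ᵐ ω ∂μ, |s.indicator (fun _ => (1 : ℝ)) ω| ≤ 1 :=
    ae_of_all μ fun ω => by by_cases h : ω ∈ s <;> simp [h]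
  calc ∫ ω in s, μ[φ|m] ω ∂μ
      = ∫ ω, s.indicator (fun _ => (1 : ℝ)) ω * μ[φ|m] ω ∂μ :=
        (integral_indicator_one_mul hs _).symm
    _ = ∫ ω, μ[s.indicator (fun _ => (1 : ℝ))|m] ω * φ ω ∂μ :=
        (integral_condExp_mul_eq_integral_mul_condExp hm hs_int hs_bdd hφ_int).symm
    _ = ∫ ω, μ[s.indicator (fun _ => (1 : ℝ))|ℋ] ω * φ ω ∂μ :=
        integral_congr_ae (hs_eq.mul EventuallyEq.rfl)
    _ = ∫ ω, s.indicator (fun _ => (1 : ℝ)) ω * μ[φ|ℋ] ω ∂μ :=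
        integral_condExp_mul_eq_integral_mul_condExp hℋ hs_int hs_bdd hφ_int
    _ = ∫ ω in s, φ ω ∂μ := by
        rw [condExp_of_stronglyMeasurable hℋ hφ hφ_int, integral_indicator_one_mul hs]

lemma condExp_indicator_inter_ae_eq [IsFiniteMeasure μ] (hm : m ≤ ℋ)
    {A C : Set Ω} (hA : MeasurableSet A) (hC : MeasurableSet[m] C)
    (h : μ[A.indicator (fun _ => (1 : ℝ))|m] =ᵐ[μ] μ[A.indicator (fun _ => (1 : ℝ))|ℋ]) :
    μ[(A ∩ C).indicator (fun _ => (1 : ℝ))|m] =ᵐ[μ]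
      μ[(A ∩ C).indicator (fun _ => (1 : ℝ))|ℋ] := by
  have hA_int : Integrable (A.indicator fun _ => (1 : ℝ)) μ := (integrable_const 1).indicator hA
  rw [inter_comm, ← indicator_indicator]
  exact (condExp_indicator hA_int hC).trans
    (h.indicator.trans (condExp_indicator hA_int (hm C hC)).symm)

lemma condExp_sup_ae_eq_of_condExp_ae_eq [IsFiniteMeasure μ] (hm₁ : m₁ ≤ m0) (hm₂ : m₂ ≤ m0)
    (hm : m ≤ m₂)
    (h : ∀ A, MeasurableSet[m₁] A →
      μ[A.indicator (fun _ => (1 : ℝ))|m] =ᵐ[μ] μ[A.indicator (fun _ => (1 : ℝ))|m₂])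
    {B : Set Ω} (hB : MeasurableSet[m₂] B) :
    μ[B.indicator (fun _ => (1 : ℝ))|m₁ ⊔ m] =ᵐ[μ] μ[B.indicator (fun _ => (1 : ℝ))|m] := by
  have hB_int : Integrable (B.indicator fun _ => (1 : ℝ)) μ :=
    (integrable_const 1).indicator (hm₂ B hB)
  refine condExp_ae_eq_of_isPiSystem (MeasurableSpace.isPiSystem_image2_inter m₁ m)
    (MeasurableSpace.generateFrom_image2_inter m₁ m).symm (sup_le hm₁ (hm.trans hm₂))
    le_sup_right hB_int ?_
  rintro _ ⟨A, hA, C, hC, rfl⟩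
  exact setIntegral_condExp_eq_of_condExp_indicator_ae_eq (hm.trans hm₂) hm₂
    ((hm₁ A hA).inter (hm.trans hm₂ C hC))
    (condExp_indicator_inter_ae_eq hm (hm₁ A hA) hC (h A hA))
    (stronglyMeasurable_const.indicator hB) hB_int

lemma condExp_ae_eq_of_condExp_sup_ae_eq [IsFiniteMeasure μ] (hm₁ : m₁ ≤ m0) (hm₂ : m₂ ≤ m0)
    (hm : m ≤ m₂)
    (h : ∀ B, MeasurableSet[m₂] B →
      μ[B.indicator (fun _ => (1 : ℝ))|m₁ ⊔ m] =ᵐ[μ] μ[B.indicator (fun _ => (1 : ℝ))|m])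
    {A : Set Ω} (hA : MeasurableSet[m₁] A) :
    μ[A.indicator (fun _ => (1 : ℝ))|m] =ᵐ[μ] μ[A.indicator (fun _ => (1 : ℝ))|m₂] := by
  have hA_int : Integrable (A.indicator fun _ => (1 : ℝ)) μ :=
    (integrable_const 1).indicator (hm₁ A hA)
  refine (condExp_ae_eq_of_isPiSystem (@MeasurableSpace.isPiSystem_measurableSet Ω m₂)
    (@MeasurableSpace.generateFrom_measurableSet Ω m₂).symm hm₂ hm hA_int fun s hs => ?_).symm
  exact setIntegral_condExp_eq_of_condExp_indicator_ae_eq (hm.trans hm₂)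
    (sup_le hm₁ (hm.trans hm₂)) (hm₂ s hs) (h s hs).symm
    (stronglyMeasurable_const.indicator (le_sup_left (b := m) A hA)) hA_int

theorem forall_condExp_ae_eq_iff_forall_condExp_sup_ae_eq [IsFiniteMeasure μ] (hm₁ : m₁ ≤ m0)
    (hm₂ : m₂ ≤ m0) (hm : m ≤ m₂) :
    (∀ A, MeasurableSet[m₁] A →
      μ[A.indicator (fun _ => (1 : ℝ))|m] =ᵐ[μ] μ[A.indicator (fun _ => (1 : ℝ))|m₂]) ↔
    ∀ B, MeasurableSet[m₂] B →
      μ[B.indicator (fun _ => (1 : ℝ))|m₁ ⊔ m] =ᵐ[μ] μ[B.indicator (fun _ => (1 : ℝ))|m] :=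
  ⟨fun h _ => condExp_sup_ae_eq_of_condExp_ae_eq hm₁ hm₂ hm h,
    fun h _ => condExp_ae_eq_of_condExp_sup_ae_eq hm₁ hm₂ hm h⟩

lemma forall_measurableSet_comap_iff {β : Type*} {mβ : MeasurableSpace β} (X : Ω → β)
    (p : Set Ω → Prop) :
    (∀ A, MeasurableSet[mβ] A → p (X ⁻¹' A)) ↔ ∀ s, MeasurableSet[mβ.comap X] s → p s :=
  ⟨fun h _ ⟨A, hA, hs⟩ => hs ▸ h A hA, fun h A hA => h _ ⟨A, hA, rfl⟩⟩

theorem forall_condExp_preimage_ae_eq_iff {E S : Type*} {𝒢E mE : MeasurableSpace E}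
    {𝒢S mS : MeasurableSpace S} [IsFiniteMeasure μ]
    (hcomplete : ∀ s, μ s = 0 → MeasurableSet[m0] s) (h𝒢E : 𝒢E ≤ mE) (h𝒢S : 𝒢S ≤ mS)
    {Y : Ω → E} (hY : Measurable Y) {X : Ω → S} (hX : Measurable X) :
    (∀ A, MeasurableSet[𝒢S] A →
      μ[(X ⁻¹' A).indicator (fun _ => (1 : ℝ))|aug μ (𝒢E.comap Y)] =ᵐ[μ]
        μ[(X ⁻¹' A).indicator (fun _ => (1 : ℝ))|mE.comap Y]) ↔
    ∀ B, MeasurableSet[mE] B →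
      μ[(Y ⁻¹' B).indicator (fun _ => (1 : ℝ))|aug μ (𝒢S.comap X) ⊔ aug μ (𝒢E.comap Y)] =ᵐ[μ]
        μ[(Y ⁻¹' B).indicator (fun _ => (1 : ℝ))|aug μ (𝒢E.comap Y)] := by
  have hm₁ : 𝒢S.comap X ≤ m0 := (MeasurableSpace.comap_mono h𝒢S).trans hX.comap_le
  have hm : 𝒢E.comap Y ≤ mE.comap Y := MeasurableSpace.comap_mono h𝒢E
  have hm₂ : mE.comap Y ≤ m0 := hY.comap_le
  have h_int {s : Set Ω} (hs : MeasurableSet[m0] s) :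
      Integrable (s.indicator fun _ => (1 : ℝ)) μ :=
    (integrable_const 1).indicator hs
  rw [aug_sup_aug]
  refine (forall_measurableSet_comap_iff X fun s =>
      μ[s.indicator (fun _ => (1 : ℝ))|aug μ (𝒢E.comap Y)] =ᵐ[μ]
        μ[s.indicator (fun _ => (1 : ℝ))|mE.comap Y]).trans
    (Iff.trans ?_ (forall_measurableSet_comap_iff Y fun s =>
      μ[s.indicator (fun _ => (1 : ℝ))|aug μ (𝒢S.comap X ⊔ 𝒢E.comap Y)] =ᵐ[μ]
        μ[s.indicator (fun _ => (1 : ℝ))|aug μ (𝒢E.comap Y)]).symm)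
  refine (forall₂_congr fun s hs => ?_).trans
    ((forall_condExp_ae_eq_iff_forall_condExp_sup_ae_eq (μ := μ) hm₁ hm₂ hm).trans
      (forall₂_congr fun s hs => ?_))
  · exact (condExp_aug_ae_eq hcomplete (hm.trans hm₂) (h_int (hm₁ s hs))).congr_left
  · rw [(condExp_aug_ae_eq hcomplete (sup_le hm₁ (hm.trans hm₂)) (h_int (hm₂ s hs))).congr_left,
      (condExp_aug_ae_eq hcomplete (hm.trans hm₂) (h_int (hm₂ s hs))).congr_right]

end

theorem condexp_iff_condLaw_general
    {E S Ω : Type*} [MeasurableSpace E] [MeasurableSpace S] [MeasurableSpace Ω]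
    (ℱE : unitInterval → MeasurableSpace E) (ℱS : unitInterval → MeasurableSpace S)
    (hleE : ∀ t, ℱE t ≤ ‹MeasurableSpace E›) (hleS : ∀ t, ℱS t ≤ ‹MeasurableSpace S›)
    (P : Measure Ω) [IsProbabilityMeasure P] (hcomplete : ∀ s : Set Ω, P s = 0 → MeasurableSet s)
    (Y : Ω → E) (hY : Measurable Y) (X : Ω → S) (hX : Measurable X) :
    (∀ t : unitInterval, ∀ A : Set S, MeasurableSet[ℱS t] A →
        P[(fun ω => Set.indicator A (fun _ => (1 : ℝ)) (X ω)) |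
            aug P (MeasurableSpace.comap Y (ℱE t))]
          =ᵐ[P]
        P[(fun ω => Set.indicator A (fun _ => (1 : ℝ)) (X ω)) |
            MeasurableSpace.comap Y ‹MeasurableSpace E›]) ↔
      (∀ t : unitInterval, ∀ B : Set E, MeasurableSet B →
        P[(fun ω => Set.indicator B (fun _ => (1 : ℝ)) (Y ω)) |
            aug P (MeasurableSpace.comap X (ℱS t)) ⊔ aug P (MeasurableSpace.comap Y (ℱE t))]
          =ᵐ[P]
        P[(fun ω => Set.indicator B (fun _ => (1 : ℝ)) (Y ω)) |
            aug P (MeasurableSpace.comap Y (ℱE t))]) :=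
  forall_congr' fun t =>
    forall_condExp_preimage_ae_eq_iff hcomplete (hleE t) (hleS t) hY hX

/-- equivalence of (ii): for all `t`, `A ∈ B_t(S)`,
`P(X ∈ A | G_t^Y) = P(X ∈ A | σ(Y))` a.s., and (iii): for all `t`, the conditional law of
`Y` given `σ(G_t^X ∪ G_t^Y)` equals the conditional law of `Y` given `G_t^Y`. -/
theorem condexp_iff_condLaw
    {E S Ω : Type*} [MeasurableSpace E] [TopologicalSpace E] [PolishSpace E] [BorelSpace E]
    [MeasurableSpace S] [TopologicalSpace S] [PolishSpace S] [BorelSpace S]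
    [MeasurableSpace Ω]
    (ℱE : unitInterval → MeasurableSpace E) (ℱS : unitInterval → MeasurableSpace S)
    (hmonoE : Monotone ℱE) (hleE : ∀ t, ℱE t ≤ ‹MeasurableSpace E›)
    (hmonoS : Monotone ℱS) (hleS : ∀ t, ℱS t ≤ ‹MeasurableSpace S›)
    (P : Measure Ω) [IsProbabilityMeasure P] (hcomplete : ∀ s : Set Ω, P s = 0 → MeasurableSet s)
    (Y : Ω → E) (hY : Measurable Y) (X : Ω → S) (hX : Measurable X) :
    (∀ t : unitInterval, ∀ A : Set S, MeasurableSet[ℱS t] A →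
        P[(fun ω => Set.indicator A (fun _ => (1 : ℝ)) (X ω)) |
            aug P (MeasurableSpace.comap Y (ℱE t))]
          =ᵐ[P]
        P[(fun ω => Set.indicator A (fun _ => (1 : ℝ)) (X ω)) |
            MeasurableSpace.comap Y ‹MeasurableSpace E›]) ↔
      (∀ t : unitInterval, ∀ B : Set E, MeasurableSet B →
        P[(fun ω => Set.indicator B (fun _ => (1 : ℝ)) (Y ω)) |
            aug P (MeasurableSpace.comap X (ℱS t)) ⊔ aug P (MeasurableSpace.comap Y (ℱE t))]
          =ᵐ[P]
        P[(fun ω => Set.indicator B (fun _ => (1 : ℝ)) (Y ω)) |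
            aug P (MeasurableSpace.comap Y (ℱE t))]) :=
  condexp_iff_condLaw_general ℱE ℱS hleE hleS P hcomplete Y hY X hX
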